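/- (Doubly-robust SOPE_n identity.) Under the support assumption, for any n ≥ 0 and any bounded function q : S×A → ℝ, J(π_e) = E_{τ∼p_{π_b}}[Σ_{a∈A} π_e(a|S_1) q(S_1,a)] + E_{τ∼p_{π_b}}[Σ_{t=1}^{∞} w(t,n) γ^{t−1} (R_t + γ Σ_{a∈A} π_e(a|S_{t+1}) q(S_{t+1},a) − q(S_t,A_t))], where w(t,n) := (d^{π_e}(S_{t−n},A_{t−n})/d^{π_b}(S_{t−n},A_{t−n})) · Π_{j=0}^{n−1} ρ_{t−j} if t > n, w(t,n) := ρ_{1:t} if 1 ≤ t ≤ n, and w(0,n) := 1; all distribution ratios are well defined p_{π_b}-almost surely and the series converges absolutely in expectation. -/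

import Mathlib

open Finset

variable {S A : Type*} [Fintype S] [Fintype A] [DecidableEq S] [DecidableEq A]
  [Inhabited S] [Inhabited A]

/-- Weight contributed by the `t`-th step of trajectory `τ` under initial
distribution `d1`, transition kernel `T` and policy `π` (`π s a = π(a|s)`,
`T s a s' = T(s'|s,a)`). -/
noncomputable def stepW (d1 : S → ℝ) (T : S → A → S → ℝ) (π : S → A → ℝ)
    (τ : ℕ → S × A) : ℕ → ℝ
  | 0 => d1 (τ 0).1 * π (τ 0).1 (τ 0).2
  | t + 1 => T (τ t).1 (τ t).2 (τ (t + 1)).1 * π (τ (t + 1)).1 (τ (t + 1)).2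

/-- Probability under `p_π` of the first `n` steps (times `0, …, n-1`) of `τ`. -/
noncomputable def preP (d1 : S → ℝ) (T : S → A → S → ℝ) (π : S → A → ℝ)
    (n : ℕ) (τ : ℕ → S × A) : ℝ :=
  ∏ t ∈ range n, stepW d1 T π τ t

/-- Extension of a length-`n` prefix to an infinite trajectory. -/
def extTraj {n : ℕ} (σ : Fin n → S × A) : ℕ → S × A :=
  fun t => if h : t < n then σ ⟨t, h⟩ else default

/-- Expectation under `p_π` of a function depending only on the first `n` steps
of the trajectory. -/
noncomputable def expVal (d1 : S → ℝ) (T : S → A → S → ℝ) (π : S → A → ℝ)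
    (n : ℕ) (f : (ℕ → S × A) → ℝ) : ℝ :=
  ∑ σ : Fin n → S × A, preP d1 T π n (extTraj σ) * f (extTraj σ)

/-- `d_t^π(s,a)`, the time-`t` state-action distribution (time is 0-indexed,
so `t = 0` is the paper's time `1`). -/
noncomputable def dSA (d1 : S → ℝ) (T : S → A → S → ℝ) (π : S → A → ℝ)
    (t : ℕ) (s : S) (a : A) : ℝ :=
  expVal d1 T π (t + 1) (fun τ => if τ t = (s, a) then 1 else 0)

/-- Single-step likelihood ratio `ρ_t = π_e(A_t|S_t)/π_b(A_t|S_t)`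
(0-indexed time). -/
noncomputable def rho (πb πe : S → A → ℝ) (τ : ℕ → S × A) (t : ℕ) : ℝ :=
  πe (τ t).1 (τ t).2 / πb (τ t).1 (τ t).2

/-- Conditional expectation under `p_π` given `(S_t, A_t) = (s, a)`, for a
function of the first `n` steps. -/
noncomputable def condExpSA (d1 : S → ℝ) (T : S → A → S → ℝ) (π : S → A → ℝ)
    (n t : ℕ) (s : S) (a : A) (f : (ℕ → S × A) → ℝ) : ℝ :=
  expVal d1 T π n (fun τ => if τ t = (s, a) then f τ else 0) / dSA d1 T π t s a

/-- Averaged state-action distribution `d_{1:Th}^π` over the first `Th` steps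
with discount `γ`. -/
noncomputable def dAvg (d1 : S → ℝ) (T : S → A → S → ℝ) (π : S → A → ℝ)
    (γ : ℝ) (Th : ℕ) (s : S) (a : A) : ℝ :=
  (∑ t ∈ range Th, γ ^ t * dSA d1 T π t s a) / (∑ t ∈ range Th, γ ^ t)

/-- Discounted average state-action occupancy `d^π` (infinite horizon),
`d^π(s,a) = (1-γ) Σ_{t≥1} γ^{t-1} d_t^π(s,a)`. -/
noncomputable def dInf (d1 : S → ℝ) (T : S → A → S → ℝ) (π : S → A → ℝ)
    (γ : ℝ) (s : S) (a : A) : ℝ :=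
  (1 - γ) * ∑' t : ℕ, γ ^ t * dSA d1 T π t s a

/-- Infinite-horizon value `J(π) = E_{p_π}[Σ_{t≥1} γ^{t-1} R_t]`. -/
noncomputable def Jinf (d1 : S → ℝ) (T : S → A → S → ℝ) (π : S → A → ℝ)
    (r : S → A → ℝ) (γ : ℝ) : ℝ :=
  ∑' t : ℕ, γ ^ t * expVal d1 T π (t + 1) (fun τ => r (τ t).1 (τ t).2)

/-- Doubly-robust weight `w(m, n)` of the paper (`m` is the paper's 1-indexed
time, with `w(0, n) = 1`). -/
noncomputable def wDR (d1 : S → ℝ) (T : S → A → S → ℝ) (πb πe : S → A → ℝ)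
    (γ : ℝ) (n : ℕ) (τ : ℕ → S × A) (m : ℕ) : ℝ :=
  if m = 0 then 1
  else if m ≤ n then ∏ j ∈ range m, rho πb πe τ j
  else (dInf d1 T πe γ (τ (m - n - 1)).1 (τ (m - n - 1)).2 /
        dInf d1 T πb γ (τ (m - n - 1)).1 (τ (m - n - 1)).2) *
      ∏ j ∈ Icc (m - n) (m - 1), rho πb πe τ j

set_option linter.unusedSectionVars false
set_option linter.unusedVariables false
set_option maxHeartbeats 1000000

section Aux
variable {d1 : S → ℝ} {T : S → A → S → ℝ} {π : S → A → ℝ}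

lemma stepW_congr {τ τ' : ℕ → S × A} {t : ℕ} (h : ∀ u, u ≤ t → τ u = τ' u) :
    stepW d1 T π τ t = stepW d1 T π τ' t := by
  cases t with
  | zero => simp [stepW, h 0 le_rfl]
  | succ m => simp [stepW, h m (by omega), h (m+1) le_rfl]

lemma preP_congr {τ τ' : ℕ → S × A} {n : ℕ} (h : ∀ u, u < n → τ u = τ' u) :
    preP d1 T π n τ = preP d1 T π n τ' :=
  Finset.prod_congr rfl fun t ht =>
    stepW_congr fun u hu => h u (lt_of_le_of_lt hu (mem_range.mp ht))

lemma extTraj_snoc_lt {n : ℕ} (σ : Fin (n+1) → S × A) (y : S × A) {t : ℕ} (ht : t ≤ n) :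
    extTraj (Fin.snoc σ y) t = extTraj σ t := by
  have h1 : t < n + 2 := by omega
  have h2 : t < n + 1 := by omega
  simp only [extTraj, dif_pos h1, dif_pos h2]
  have : (⟨t, h1⟩ : Fin (n+2)) = Fin.castSucc ⟨t, h2⟩ := rfl
  rw [this, Fin.snoc_castSucc]

lemma extTraj_snoc_last {n : ℕ} (σ : Fin (n+1) → S × A) (y : S × A) :
    extTraj (Fin.snoc σ y) (n+1) = y := by
  simp only [extTraj, dif_pos (by omega : n + 1 < n + 2)]
  have : (⟨n+1, by omega⟩ : Fin (n+2)) = Fin.last (n+1) := rfl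
  rw [this, Fin.snoc_last]

def snocE (n : ℕ) : ((Fin (n+1) → S × A) × (S × A)) ≃ (Fin (n+2) → S × A) where
  toFun p := Fin.snoc p.1 p.2
  invFun σ := (Fin.init σ, σ (Fin.last _))
  left_inv p := by simp
  right_inv σ := by simp

@[simp] lemma snocE_apply {n : ℕ} (p : (Fin (n+1) → S × A) × (S × A)) :
    snocE n p = Fin.snoc p.1 p.2 := rfl

lemma step (hTsum : ∀ s a, ∑ s', T s a s' = 1) (hπsum : ∀ s, ∑ a, π s a = 1)
    (n : ℕ) (g : (ℕ → S × A) → S × A → ℝ)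
    (hg : ∀ τ τ', (∀ t, t ≤ n → τ t = τ' t) → ∀ y, g τ y = g τ' y) :
    expVal d1 T π (n + 2) (fun τ => g τ (τ (n + 1)))
      = expVal d1 T π (n + 1)
          (fun τ => ∑ y : S × A, T (τ n).1 (τ n).2 y.1 * π y.1 y.2 * g τ y) := by
  unfold expVal
  rw [← (snocE (S := S) (A := A) n).sum_comp]
  rw [Fintype.sum_prod_type]
  simp only [snocE_apply]
  refine Finset.sum_congr rfl fun σ' _ => ?_
  rw [Finset.mul_sum]
  refine Finset.sum_congr rfl fun y _ => ?_
  have hagree : ∀ t, t ≤ n → extTraj (Fin.snoc σ' y) t = extTraj σ' t :=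
    fun t ht => extTraj_snoc_lt σ' y ht
  have hlast := extTraj_snoc_last σ' y
  have hsplit : preP d1 T π (n+2) (extTraj (Fin.snoc σ' y))
      = preP d1 T π (n+1) (extTraj σ')
        * (T (extTraj σ' n).1 (extTraj σ' n).2 y.1 * π y.1 y.2) := by
    rw [preP, Finset.prod_range_succ]
    rw [show (∏ t ∈ range (n+1), stepW d1 T π (extTraj (Fin.snoc σ' y)) t)
        = preP d1 T π (n+1) (extTraj σ') from
      preP_congr (fun u hu => hagree u (by omega))]
    congr 1
    show T (extTraj (Fin.snoc σ' y) n).1 (extTraj (Fin.snoc σ' y) n).2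
        (extTraj (Fin.snoc σ' y) (n+1)).1
        * π (extTraj (Fin.snoc σ' y) (n+1)).1 (extTraj (Fin.snoc σ' y) (n+1)).2 = _
    rw [hagree n le_rfl, hlast]
  rw [hsplit, hlast, hg _ _ hagree y]
  ring

lemma sum_T_pi (hTsum : ∀ s a, ∑ s', T s a s' = 1) (hπsum : ∀ s, ∑ a, π s a = 1)
    (x : S × A) : ∑ y : S × A, T x.1 x.2 y.1 * π y.1 y.2 = 1 := by
  rw [Fintype.sum_prod_type]
  have : ∀ s' : S, ∑ a' : A, T x.1 x.2 s' * π s' a' = T x.1 x.2 s' := by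
    intro s'; rw [← Finset.mul_sum, hπsum, mul_one]
  simp only [this]
  exact hTsum x.1 x.2

lemma expVal_one (F : S × A → ℝ) :
    expVal d1 T π 1 (fun τ => F (τ 0)) = ∑ x : S × A, d1 x.1 * π x.1 x.2 * F x := by
  unfold expVal
  rw [← Equiv.sum_comp (Equiv.funUnique (Fin 1) (S × A)).symm]
  refine Finset.sum_congr rfl fun x _ => ?_
  rw [preP, Finset.prod_range_one]
  rfl

lemma expVal_eval (t : ℕ) (F : S × A → ℝ) :
    expVal d1 T π (t + 1) (fun τ => F (τ t))
      = ∑ x : S × A, dSA d1 T π t x.1 x.2 * F x := by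
  unfold dSA expVal
  simp only [Finset.sum_mul]
  rw [Finset.sum_comm]
  refine Finset.sum_congr rfl fun σ _ => ?_
  simp [mul_ite, Finset.sum_ite_eq, Prod.mk.eta, mul_comm]

lemma expVal_const (hTsum : ∀ s a, ∑ s', T s a s' = 1) (hπsum : ∀ s, ∑ a, π s a = 1)
    (hd1sum : ∑ s, d1 s = 1) (c : ℝ) :
    ∀ m : ℕ, expVal d1 T π (m + 1) (fun _ => c) = c := by
  intro m
  induction m with
  | zero =>
      show expVal d1 T π 1 (fun _ => c) = c
      have h : expVal d1 T π 1 (fun _ => c) = ∑ x : S × A, d1 x.1 * π x.1 x.2 * c :=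
        expVal_one (fun _ => c)
      rw [h, ← Finset.sum_mul]
      rw [show (∑ x : S × A, d1 x.1 * π x.1 x.2) = 1 by
        rw [Fintype.sum_prod_type]
        have : ∀ s : S, ∑ a : A, d1 s * π s a = d1 s := by
          intro s; rw [← Finset.mul_sum, hπsum, mul_one]
        simp only [this]; exact hd1sum]
      rw [one_mul]
  | succ m ih =>
      have h2 : (fun τ : ℕ → S × A =>
          ∑ y : S × A, T (τ m).1 (τ m).2 y.1 * π y.1 y.2 * c) = (fun _ => c) := by
        funext τ; rw [← Finset.sum_mul, sum_T_pi hTsum hπsum, one_mul]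
      calc expVal d1 T π (m + 1 + 1) (fun _ : ℕ → S × A => c)
          = expVal d1 T π (m + 1)
              (fun τ => ∑ y : S × A, T (τ m).1 (τ m).2 y.1 * π y.1 y.2 * c) :=
            step hTsum hπsum m (fun _ _ => c) (fun _ _ _ _ => rfl)
        _ = expVal d1 T π (m + 1) (fun _ => c) := by rw [h2]
        _ = c := ih

variable {πb πe : S → A → ℝ}

lemma stepW_nonneg (hd1 : ∀ s, 0 ≤ d1 s) (hT : ∀ s a s', 0 ≤ T s a s')
    (hπ : ∀ s a, 0 ≤ π s a) (τ : ℕ → S × A) (t : ℕ) : 0 ≤ stepW d1 T π τ t := by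
  cases t with
  | zero => exact mul_nonneg (hd1 _) (hπ _ _)
  | succ m => exact mul_nonneg (hT _ _ _) (hπ _ _)

lemma preP_nonneg (hd1 : ∀ s, 0 ≤ d1 s) (hT : ∀ s a s', 0 ≤ T s a s')
    (hπ : ∀ s a, 0 ≤ π s a) (n : ℕ) (τ : ℕ → S × A) : 0 ≤ preP d1 T π n τ :=
  Finset.prod_nonneg fun t _ => stepW_nonneg hd1 hT hπ τ t

lemma dSA_nonneg (hd1 : ∀ s, 0 ≤ d1 s) (hT : ∀ s a s', 0 ≤ T s a s')
    (hπ : ∀ s a, 0 ≤ π s a) (t : ℕ) (s : S) (a : A) : 0 ≤ dSA d1 T π t s a := by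
  unfold dSA expVal
  refine Finset.sum_nonneg fun σ _ => mul_nonneg (preP_nonneg hd1 hT hπ _ _) ?_
  dsimp only
  split <;> norm_num

lemma dSA_le_one (hd1 : ∀ s, 0 ≤ d1 s) (hd1sum : ∑ s, d1 s = 1)
    (hT : ∀ s a s', 0 ≤ T s a s') (hTsum : ∀ s a, ∑ s', T s a s' = 1)
    (hπ : ∀ s a, 0 ≤ π s a) (hπsum : ∀ s, ∑ a, π s a = 1)
    (t : ℕ) (s : S) (a : A) : dSA d1 T π t s a ≤ 1 := by
  have h1 : expVal d1 T π (t + 1) (fun _ => (1:ℝ)) = 1 :=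
    expVal_const hTsum hπsum hd1sum 1 t
  calc dSA d1 T π t s a ≤ expVal d1 T π (t + 1) (fun _ => (1:ℝ)) := by
        unfold dSA expVal
        refine Finset.sum_le_sum fun σ _ => ?_
        refine mul_le_mul_of_nonneg_left ?_ (preP_nonneg hd1 hT hπ _ _)
        dsimp only
        split <;> norm_num
    _ = 1 := h1

lemma dSA_succ (hTsum : ∀ s a, ∑ s', T s a s' = 1) (hπsum : ∀ s, ∑ a, π s a = 1)
    (t : ℕ) (s' : S) (a' : A) :
    dSA d1 T π (t + 1) s' a'
      = ∑ x : S × A, dSA d1 T π t x.1 x.2 * (T x.1 x.2 s' * π s' a') := by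
  calc dSA d1 T π (t + 1) s' a'
      = expVal d1 T π (t + 2)
          (fun τ => (fun (_ : ℕ → S × A) (y : S × A) =>
            if y = (s', a') then (1:ℝ) else 0) τ (τ (t + 1))) := rfl
    _ = expVal d1 T π (t + 1)
          (fun τ => ∑ y : S × A, T (τ t).1 (τ t).2 y.1 * π y.1 y.2 *
            (if y = (s', a') then (1:ℝ) else 0)) :=
        step hTsum hπsum t
          (fun (_ : ℕ → S × A) (y : S × A) => if y = (s', a') then (1:ℝ) else 0)
          (fun _ _ _ _ => rfl)
    _ = expVal d1 T π (t + 1) (fun τ => T (τ t).1 (τ t).2 s' * π s' a') := by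
        congr 1; funext τ
        simp [mul_ite, Finset.sum_ite_eq']
    _ = ∑ x : S × A, dSA d1 T π t x.1 x.2 * (T x.1 x.2 s' * π s' a') :=
        expVal_eval t (fun x => T x.1 x.2 s' * π s' a')

noncomputable def Kstep (T : S → A → S → ℝ) (π : S → A → ℝ) (g : S × A → ℝ) :
    S × A → ℝ :=
  fun x => ∑ y : S × A, T x.1 x.2 y.1 * π y.1 y.2 * g y

lemma dSA_Kstep (hTsum : ∀ s a, ∑ s', T s a s' = 1) (hπsum : ∀ s, ∑ a, π s a = 1)
    (t : ℕ) (g : S × A → ℝ) :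
    ∑ x : S × A, dSA d1 T π t x.1 x.2 * Kstep T π g x
      = ∑ x : S × A, dSA d1 T π (t + 1) x.1 x.2 * g x := by
  have h : ∀ x : S × A, dSA d1 T π (t + 1) x.1 x.2
      = ∑ z : S × A, dSA d1 T π t z.1 z.2 * (T z.1 z.2 x.1 * π x.1 x.2) :=
    fun x => dSA_succ hTsum hπsum t x.1 x.2
  simp only [h, Kstep, Finset.mul_sum, Finset.sum_mul]
  rw [Finset.sum_comm]
  exact Finset.sum_congr rfl fun x _ => Finset.sum_congr rfl fun y _ => by ring

lemma dSA_Kstep_iter (hTsum : ∀ s a, ∑ s', T s a s' = 1)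
    (hπsum : ∀ s, ∑ a, π s a = 1) :
    ∀ (n t : ℕ) (g : S × A → ℝ),
    ∑ x : S × A, dSA d1 T π t x.1 x.2 * (Kstep T π)^[n] g x
      = ∑ x : S × A, dSA d1 T π (t + n) x.1 x.2 * g x := by
  intro n
  induction n with
  | zero => intro t g; simp
  | succ n ih =>
      intro t g
      have h1 : ∀ x : S × A, (Kstep T π)^[n+1] g x = (Kstep T π)^[n] (Kstep T π g) x :=
        fun x => by rw [Function.iterate_succ_apply]
      simp only [h1]
      rw [ih t (Kstep T π g), dSA_Kstep hTsum hπsum]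
      rw [show t + n + 1 = t + (n + 1) by omega]

lemma rho_convert (hmul : ∀ s a, πb s a * (πe s a / πb s a) = πe s a)
    (m : ℕ) (F : (ℕ → S × A) → ℝ) :
    expVal d1 T πb m (fun τ => (∏ j ∈ range m, rho πb πe τ j) * F τ)
      = expVal d1 T πe m F := by
  unfold expVal
  refine Finset.sum_congr rfl fun σ _ => ?_
  rw [← mul_assoc]
  congr 1
  rw [preP, preP, ← Finset.prod_mul_distrib]
  refine Finset.prod_congr rfl fun j _ => ?_
  cases j with
  | zero =>
      show d1 _ * πb _ _ * (πe _ _ / πb _ _) = d1 _ * πe _ _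
      rw [mul_assoc, hmul]
  | succ i =>
      show T _ _ _ * πb _ _ * (πe _ _ / πb _ _) = T _ _ _ * πe _ _
      rw [mul_assoc, hmul]

lemma chainLemma (hTsum : ∀ s a, ∑ s', T s a s' = 1)
    (hπbsum : ∀ s, ∑ a, πb s a = 1)
    (hmul : ∀ s a, πb s a * (πe s a / πb s a) = πe s a) :
    ∀ (n m : ℕ) (h g : S × A → ℝ),
    expVal d1 T πb (m + n + 1)
        (fun τ => h (τ m) * (∏ j ∈ Icc (m+1) (m+n), rho πb πe τ j) * g (τ (m+n)))
      = expVal d1 T πb (m + 1) (fun τ => h (τ m) * (Kstep T πe)^[n] g (τ m)) := by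
  intro n
  induction n with
  | zero =>
      intro m h g
      have : Icc (m+1) (m+0) = (∅ : Finset ℕ) := Finset.Icc_eq_empty (by omega)
      rw [this]
      simp
  | succ n ih =>
      intro m h g
      have hdep : ∀ τ τ' : ℕ → S × A, (∀ t, t ≤ m + n → τ t = τ' t) → ∀ y : S × A,
          h (τ m) * (∏ j ∈ Icc (m+1) (m+n), rho πb πe τ j) *
            ((πe y.1 y.2 / πb y.1 y.2) * g y)
          = h (τ' m) * (∏ j ∈ Icc (m+1) (m+n), rho πb πe τ' j) *
            ((πe y.1 y.2 / πb y.1 y.2) * g y) := by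
        intro τ τ' hag y
        rw [hag m (by omega)]
        congr 2
        refine Finset.prod_congr rfl fun j hj => ?_
        have hj' : j ≤ m + n := (Finset.mem_Icc.mp hj).2
        unfold rho
        rw [hag j hj']
      have hst := step (d1 := d1) (π := πb) hTsum hπbsum (m+n)
        (fun (τ : ℕ → S × A) (y : S × A) => h (τ m) *
          (∏ j ∈ Icc (m+1) (m+n), rho πb πe τ j) *
          ((πe y.1 y.2 / πb y.1 y.2) * g y)) hdep
      have hfun : (fun τ : ℕ → S × A => h (τ m) *
            (∏ j ∈ Icc (m+1) (m+n+1), rho πb πe τ j) * g (τ (m+n+1)))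
          = (fun τ : ℕ → S × A => h (τ m) *
            (∏ j ∈ Icc (m+1) (m+n), rho πb πe τ j) *
            ((πe (τ (m+n+1)).1 (τ (m+n+1)).2 / πb (τ (m+n+1)).1 (τ (m+n+1)).2) *
              g (τ (m+n+1)))) := by
        funext τ
        rw [show m + n + 1 = m + n + 1 from rfl,
          Finset.prod_Icc_succ_top (by omega : m + 1 ≤ m + n + 1)]
        unfold rho
        ring
      show expVal d1 T πb ((m+n) + 2)
          (fun τ => h (τ m) * (∏ j ∈ Icc (m+1) (m+n+1), rho πb πe τ j) *
            g (τ (m+n+1)))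
        = expVal d1 T πb (m + 1) (fun τ => h (τ m) * (Kstep T πe)^[n+1] g (τ m))
      rw [hfun, hst]
      have hsimp : (fun τ : ℕ → S × A => ∑ y : S × A,
            T (τ (m+n)).1 (τ (m+n)).2 y.1 * πb y.1 y.2 *
              (h (τ m) * (∏ j ∈ Icc (m+1) (m+n), rho πb πe τ j) *
                ((πe y.1 y.2 / πb y.1 y.2) * g y)))
          = (fun τ : ℕ → S × A => h (τ m) *
              (∏ j ∈ Icc (m+1) (m+n), rho πb πe τ j) *
              Kstep T πe g (τ (m+n))) := by
        funext τ
        rw [Kstep, Finset.mul_sum]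
        refine Finset.sum_congr rfl fun y _ => ?_
        have hm := hmul y.1 y.2
        set P := ∏ j ∈ Icc (m+1) (m+n), rho πb πe τ j
        linear_combination (T (τ (m+n)).1 (τ (m+n)).2 y.1 * h (τ m) * P * g y) * hm
      rw [hsimp, ih m h (Kstep T πe g), ← Function.iterate_succ_apply]

lemma hmul_of_supp (hπe : ∀ s a, 0 ≤ πe s a)
    (hsupp : ∀ s a, 0 < πe s a → 0 < πb s a) (s : S) (a : A) :
    πb s a * (πe s a / πb s a) = πe s a := by
  rcases eq_or_ne (πb s a) 0 with h | h
  · have he : πe s a = 0 := by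
      by_contra hne
      have hpos : 0 < πe s a := lt_of_le_of_ne (hπe s a) (Ne.symm hne)
      have := hsupp s a hpos
      rw [h] at this
      exact lt_irrefl 0 this
    simp [h, he]
  · field_simp

lemma pe_le_M_pb (hπb : ∀ s a, 0 ≤ πb s a) (hπe : ∀ s a, 0 ≤ πe s a)
    (hsupp : ∀ s a, 0 < πe s a → 0 < πb s a) (s : S) (a : A) :
    πe s a ≤ (∑ x : S × A, πe x.1 x.2 / πb x.1 x.2) * πb s a := by
  have hM : πe s a / πb s a ≤ ∑ x : S × A, πe x.1 x.2 / πb x.1 x.2 :=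
    Finset.single_le_sum (f := fun x : S × A => πe x.1 x.2 / πb x.1 x.2)
      (fun x _ => div_nonneg (hπe x.1 x.2) (hπb x.1 x.2)) (Finset.mem_univ (s, a))
  calc πe s a = πb s a * (πe s a / πb s a) := (hmul_of_supp hπe hsupp s a).symm
    _ ≤ πb s a * (∑ x : S × A, πe x.1 x.2 / πb x.1 x.2) :=
        mul_le_mul_of_nonneg_left hM (hπb s a)
    _ = (∑ x : S × A, πe x.1 x.2 / πb x.1 x.2) * πb s a := mul_comm _ _

lemma M_nonneg (hπb : ∀ s a, 0 ≤ πb s a) (hπe : ∀ s a, 0 ≤ πe s a) :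
    0 ≤ ∑ x : S × A, πe x.1 x.2 / πb x.1 x.2 :=
  Finset.sum_nonneg fun x _ => div_nonneg (hπe x.1 x.2) (hπb x.1 x.2)

lemma dSA_e_le (hd1 : ∀ s, 0 ≤ d1 s) (hT : ∀ s a s', 0 ≤ T s a s')
    (hπb : ∀ s a, 0 ≤ πb s a) (hπe : ∀ s a, 0 ≤ πe s a)
    (hsupp : ∀ s a, 0 < πe s a → 0 < πb s a) (t : ℕ) (s : S) (a : A) :
    dSA d1 T πe t s a
      ≤ (∑ x : S × A, πe x.1 x.2 / πb x.1 x.2) ^ (t + 1) * dSA d1 T πb t s a := by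
  set M := ∑ x : S × A, πe x.1 x.2 / πb x.1 x.2 with hMdef
  have hM0 : 0 ≤ M := M_nonneg hπb hπe
  have hstep : ∀ (τ : ℕ → S × A) (u : ℕ),
      stepW d1 T πe τ u ≤ M * stepW d1 T πb τ u := by
    intro τ u
    cases u with
    | zero =>
        show d1 _ * πe _ _ ≤ M * (d1 _ * πb _ _)
        calc d1 (τ 0).1 * πe (τ 0).1 (τ 0).2
            ≤ d1 (τ 0).1 * (M * πb (τ 0).1 (τ 0).2) :=
              mul_le_mul_of_nonneg_left
                (by rw [mul_comm M]
                    exact le_trans (pe_le_M_pb hπb hπe hsupp _ _) (le_of_eq (mul_comm _ _)))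
                (hd1 _)
          _ = M * (d1 (τ 0).1 * πb (τ 0).1 (τ 0).2) := by ring
    | succ m =>
        show T _ _ _ * πe _ _ ≤ M * (T _ _ _ * πb _ _)
        calc T (τ m).1 (τ m).2 (τ (m+1)).1 * πe (τ (m+1)).1 (τ (m+1)).2
            ≤ T (τ m).1 (τ m).2 (τ (m+1)).1 * (M * πb (τ (m+1)).1 (τ (m+1)).2) :=
              mul_le_mul_of_nonneg_left
                (by rw [mul_comm M]
                    exact le_trans (pe_le_M_pb hπb hπe hsupp _ _) (le_of_eq (mul_comm _ _)))
                (hT _ _ _)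
          _ = M * (T (τ m).1 (τ m).2 (τ (m+1)).1 * πb (τ (m+1)).1 (τ (m+1)).2) := by ring
  have hpre : ∀ τ : ℕ → S × A,
      preP d1 T πe (t+1) τ ≤ M ^ (t+1) * preP d1 T πb (t+1) τ := by
    intro τ
    have h1 : preP d1 T πe (t+1) τ ≤ ∏ u ∈ range (t+1), (M * stepW d1 T πb τ u) :=
      Finset.prod_le_prod (fun u _ => stepW_nonneg hd1 hT hπe τ u)
        (fun u _ => hstep τ u)
    have h2 : ∏ u ∈ range (t+1), (M * stepW d1 T πb τ u)
        = M ^ (t+1) * preP d1 T πb (t+1) τ := by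
      rw [Finset.prod_mul_distrib, Finset.prod_const, Finset.card_range, preP]
    rw [preP] at h1 ⊢
    rw [← h2]
    exact h1
  unfold dSA expVal
  rw [Finset.mul_sum]
  refine Finset.sum_le_sum fun σ _ => ?_
  dsimp only
  split
  · rw [mul_one, ← mul_assoc, mul_one]
    exact hpre _
  · simp

lemma summable_geom_dSA (hd1 : ∀ s, 0 ≤ d1 s) (hT : ∀ s a s', 0 ≤ T s a s')
    (hπ : ∀ s a, 0 ≤ π s a) {γ : ℝ} (hγ0 : 0 ≤ γ) (hγ1 : γ < 1)
    (hd1sum : ∑ s, d1 s = 1) (hTsum : ∀ s a, ∑ s', T s a s' = 1)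
    (hπsum : ∀ s, ∑ a, π s a = 1) (s : S) (a : A) :
    Summable (fun t : ℕ => γ ^ t * dSA d1 T π t s a) := by
  refine Summable.of_nonneg_of_le
    (fun t => mul_nonneg (pow_nonneg hγ0 t) (dSA_nonneg hd1 hT hπ t s a))
    (fun t => ?_) (summable_geometric_of_lt_one hγ0 hγ1)
  calc γ ^ t * dSA d1 T π t s a ≤ γ ^ t * 1 :=
        mul_le_mul_of_nonneg_left
          (dSA_le_one hd1 hd1sum hT hTsum hπ hπsum t s a) (pow_nonneg hγ0 t)
    _ = γ ^ t := mul_one _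

lemma dInf_zero_terms (hd1 : ∀ s, 0 ≤ d1 s) (hT : ∀ s a s', 0 ≤ T s a s')
    (hπ : ∀ s a, 0 ≤ π s a) {γ : ℝ} (hγ0 : 0 ≤ γ) (hγ1 : γ < 1)
    (hd1sum : ∑ s, d1 s = 1) (hTsum : ∀ s a, ∑ s', T s a s' = 1)
    (hπsum : ∀ s, ∑ a, π s a = 1) (s : S) (a : A)
    (h : dInf d1 T π γ s a = 0) : ∀ t, γ ^ t * dSA d1 T π t s a = 0 := by
  have hne : (1 : ℝ) - γ ≠ 0 := by linarith
  have htsum : ∑' t : ℕ, γ ^ t * dSA d1 T π t s a = 0 := by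
    unfold dInf at h
    exact (mul_eq_zero.mp h).resolve_left hne
  have hsummable := summable_geom_dSA hd1 hT hπ hγ0 hγ1 hd1sum hTsum hπsum s a
  intro t
  have hnn : ∀ u : ℕ, 0 ≤ γ ^ u * dSA d1 T π u s a :=
    fun u => mul_nonneg (pow_nonneg hγ0 u) (dSA_nonneg hd1 hT hπ u s a)
  have hle : γ ^ t * dSA d1 T π t s a ≤ ∑' u : ℕ, γ ^ u * dSA d1 T π u s a :=
    Summable.le_tsum hsummable t fun u _ => hnn u
  exact le_antisymm (htsum ▸ hle) (hnn t)

lemma dSA_zero (s : S) (a : A) : dSA d1 T π 0 s a = d1 s * π s a := by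
  calc dSA d1 T π 0 s a
      = expVal d1 T π 1 (fun τ => (fun x => if x = (s, a) then (1:ℝ) else 0) (τ 0)) := rfl
    _ = ∑ y : S × A, d1 y.1 * π y.1 y.2 * (if y = (s, a) then (1:ℝ) else 0) :=
        expVal_one (fun x => if x = (s, a) then (1:ℝ) else 0)
    _ = d1 s * π s a := by simp [mul_ite, Finset.sum_ite_eq']

lemma summable_weighted (hd1 : ∀ s, 0 ≤ d1 s) (hT : ∀ s a s', 0 ≤ T s a s')
    (hπ : ∀ s a, 0 ≤ π s a) {γ : ℝ} (hγ0 : 0 ≤ γ) (hγ1 : γ < 1)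
    (hd1sum : ∑ s, d1 s = 1) (hTsum : ∀ s a, ∑ s', T s a s' = 1)
    (hπsum : ∀ s, ∑ a, π s a = 1) (F : S × A → ℝ) :
    Summable (fun k : ℕ => γ ^ k * ∑ x : S × A, dSA d1 T π k x.1 x.2 * F x) := by
  refine Summable.of_abs (Summable.of_nonneg_of_le (fun k => abs_nonneg _)
    (fun k => ?_)
    ((summable_geometric_of_lt_one hγ0 hγ1).mul_right (∑ x : S × A, |F x|)))
  rw [abs_mul, abs_pow, abs_of_nonneg hγ0, mul_comm (γ ^ k) (∑ x : S × A, |F x|),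
    mul_comm (γ ^ k)]
  refine mul_le_mul_of_nonneg_right ?_ (pow_nonneg hγ0 k)
  calc |∑ x : S × A, dSA d1 T π k x.1 x.2 * F x|
      ≤ ∑ x : S × A, |dSA d1 T π k x.1 x.2 * F x| := Finset.abs_sum_le_sum_abs _ _
    _ ≤ ∑ x : S × A, |F x| := by
        refine Finset.sum_le_sum fun x _ => ?_
        rw [abs_mul, abs_of_nonneg (dSA_nonneg hd1 hT hπ _ _ _)]
        calc dSA d1 T π k x.1 x.2 * |F x| ≤ 1 * |F x| :=
              mul_le_mul_of_nonneg_right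
                (dSA_le_one hd1 hd1sum hT hTsum hπ hπsum _ _ _) (abs_nonneg _)
          _ = |F x| := one_mul _

lemma wDR_congr {γ : ℝ} (n : ℕ)
    {τ τ' : ℕ → S × A} (k : ℕ) (hag : ∀ t, t ≤ k → τ t = τ' t) :
    wDR d1 T πb πe γ n τ (k + 1) = wDR d1 T πb πe γ n τ' (k + 1) := by
  unfold wDR
  rw [if_neg (by omega : ¬ (k + 1 = 0)), if_neg (by omega : ¬ (k + 1 = 0))]
  by_cases h : k + 1 ≤ n
  · rw [if_pos h, if_pos h]
    refine Finset.prod_congr rfl fun j hj => ?_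
    have hj' : j ≤ k := by have := Finset.mem_range.mp hj; omega
    unfold rho
    rw [hag j hj']
  · rw [if_neg h, if_neg h]
    have h1 : k + 1 - n - 1 ≤ k := by omega
    rw [hag _ h1]
    congr 1
    refine Finset.prod_congr rfl fun j hj => ?_
    have hj2 : j ≤ k := by
      have := (Finset.mem_Icc.mp hj).2; omega
    unfold rho
    rw [hag j hj2]

lemma sum_step_val (hTsum : ∀ s a, ∑ s', T s a s' = 1)
    (hπbsum : ∀ s, ∑ a, πb s a = 1) {γ : ℝ} (x : S × A) (c : ℝ) (V : S → ℝ) :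
    ∑ y : S × A, T x.1 x.2 y.1 * πb y.1 y.2 * (c + γ * V y.1)
      = c + γ * ∑ s', T x.1 x.2 s' * V s' := by
  rw [Fintype.sum_prod_type]
  have h1 : ∀ s' : S, ∑ a' : A, T x.1 x.2 s' * πb s' a' * (c + γ * V s')
      = T x.1 x.2 s' * (c + γ * V s') := by
    intro s'
    calc ∑ a' : A, T x.1 x.2 s' * πb s' a' * (c + γ * V s')
        = (∑ a' : A, πb s' a') * (T x.1 x.2 s' * (c + γ * V s')) := by
          rw [Finset.sum_mul]
          exact Finset.sum_congr rfl fun a' _ => by ring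
      _ = T x.1 x.2 s' * (c + γ * V s') := by rw [hπbsum, one_mul]
  simp only [h1]
  have h2 : ∑ s' : S, T x.1 x.2 s' * (c + γ * V s')
      = (∑ s' : S, T x.1 x.2 s' * c) + ∑ s' : S, T x.1 x.2 s' * (γ * V s') := by
    rw [← Finset.sum_add_distrib]
    exact Finset.sum_congr rfl fun s' _ => by ring
  rw [h2, ← Finset.sum_mul, hTsum, one_mul]
  congr 1
  rw [Finset.mul_sum]
  exact Finset.sum_congr rfl fun s' _ => by ring

lemma core_x (hd1 : ∀ s, 0 ≤ d1 s) (hT : ∀ s a s', 0 ≤ T s a s')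
    (hπb : ∀ s a, 0 ≤ πb s a) (hπe : ∀ s a, 0 ≤ πe s a)
    (hsupp : ∀ s a, 0 < πe s a → 0 < πb s a)
    {γ : ℝ} (hγ0 : 0 ≤ γ) (hγ1 : γ < 1)
    (hd1sum : ∑ s, d1 s = 1) (hTsum : ∀ s a, ∑ s', T s a s' = 1)
    (hπbsum : ∀ s, ∑ a, πb s a = 1) (hπesum : ∀ s, ∑ a, πe s a = 1)
    (x : S × A) (c : ℝ) :
    ∑' j : ℕ, (γ ^ j * dSA d1 T πb j x.1 x.2) *
        ((dInf d1 T πe γ x.1 x.2 / dInf d1 T πb γ x.1 x.2) * c)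
      = (∑' t : ℕ, γ ^ t * dSA d1 T πe t x.1 x.2) * c := by
  have hne : (1 : ℝ) - γ ≠ 0 := by linarith
  rw [tsum_mul_right]
  rcases eq_or_ne (dInf d1 T πb γ x.1 x.2) 0 with h0 | h0
  · have h1 : ∀ t, γ ^ t * dSA d1 T πb t x.1 x.2 = 0 :=
      dInf_zero_terms hd1 hT hπb hγ0 hγ1 hd1sum hTsum hπbsum x.1 x.2 h0
    have h2 : ∀ t, γ ^ t * dSA d1 T πe t x.1 x.2 = 0 := by
      intro t
      have hub : γ ^ t * dSA d1 T πe t x.1 x.2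
          ≤ (∑ z : S × A, πe z.1 z.2 / πb z.1 z.2) ^ (t+1) *
            (γ ^ t * dSA d1 T πb t x.1 x.2) := by
        rw [show (∑ z : S × A, πe z.1 z.2 / πb z.1 z.2) ^ (t+1) *
            (γ ^ t * dSA d1 T πb t x.1 x.2)
          = γ ^ t * ((∑ z : S × A, πe z.1 z.2 / πb z.1 z.2) ^ (t+1) *
            dSA d1 T πb t x.1 x.2) from by ring]
        exact mul_le_mul_of_nonneg_left
          (dSA_e_le hd1 hT hπb hπe hsupp t x.1 x.2) (pow_nonneg hγ0 t)
      have hlb : 0 ≤ γ ^ t * dSA d1 T πe t x.1 x.2 :=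
        mul_nonneg (pow_nonneg hγ0 t) (dSA_nonneg hd1 hT hπe t x.1 x.2)
      rw [h1 t, mul_zero] at hub
      exact le_antisymm hub hlb
    simp only [h1, h2, tsum_zero]
    simp
  · have hb : ∑' j : ℕ, γ ^ j * dSA d1 T πb j x.1 x.2
        = dInf d1 T πb γ x.1 x.2 / (1 - γ) := by
      rw [eq_div_iff hne]
      unfold dInf
      ring
    have he : ∑' t : ℕ, γ ^ t * dSA d1 T πe t x.1 x.2
        = dInf d1 T πe γ x.1 x.2 / (1 - γ) := by
      rw [eq_div_iff hne]
      unfold dInf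
      ring
    rw [hb, he]
    first
    | (field_simp; ring)
    | field_simp



noncomputable def g0fun (T : S → A → S → ℝ) (πe : S → A → ℝ) (r q : S → A → ℝ)
    (γ : ℝ) : S × A → ℝ :=
  fun x => r x.1 x.2 + γ * (∑ s', T x.1 x.2 s' * ∑ a, πe s' a * q s' a) - q x.1 x.2

noncomputable def drfun (d1 : S → ℝ) (T : S → A → S → ℝ) (πb πe : S → A → ℝ)
    (γ : ℝ) : S × A → ℝ :=
  fun x => dInf d1 T πe γ x.1 x.2 / dInf d1 T πb γ x.1 x.2

lemma main_red (hTsum : ∀ s a, ∑ s', T s a s' = 1) (hπbsum : ∀ s, ∑ a, πb s a = 1)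
    {γ : ℝ} (r q : S → A → ℝ) (n k : ℕ) :
    expVal d1 T πb (k + 2)
        (fun τ => wDR d1 T πb πe γ n τ (k + 1) *
          (r (τ k).1 (τ k).2
            + γ * (∑ a : A, πe (τ (k + 1)).1 a * q (τ (k + 1)).1 a)
            - q (τ k).1 (τ k).2))
      = expVal d1 T πb (k + 1)
          (fun τ => wDR d1 T πb πe γ n τ (k + 1) * g0fun T πe r q γ (τ k)) := by
  have hst := step (d1 := d1) (π := πb) hTsum hπbsum k
    (fun τ y => wDR d1 T πb πe γ n τ (k + 1) *
      ((r (τ k).1 (τ k).2 - q (τ k).1 (τ k).2)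
        + γ * ∑ a : A, πe y.1 a * q y.1 a))
    (by intro τ τ' hag y
        rw [wDR_congr n k hag, hag k le_rfl])
  calc expVal d1 T πb (k + 2)
        (fun τ => wDR d1 T πb πe γ n τ (k + 1) *
          (r (τ k).1 (τ k).2
            + γ * (∑ a : A, πe (τ (k + 1)).1 a * q (τ (k + 1)).1 a)
            - q (τ k).1 (τ k).2))
      = expVal d1 T πb (k + 2)
          (fun τ => (fun (τ : ℕ → S × A) (y : S × A) =>
            wDR d1 T πb πe γ n τ (k + 1) *
              ((r (τ k).1 (τ k).2 - q (τ k).1 (τ k).2)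
                + γ * ∑ a : A, πe y.1 a * q y.1 a)) τ (τ (k + 1))) := by
        congr 1; funext τ; simp only; ring
    _ = expVal d1 T πb (k + 1)
          (fun τ => ∑ y : S × A, T (τ k).1 (τ k).2 y.1 * πb y.1 y.2 *
            (wDR d1 T πb πe γ n τ (k + 1) *
              ((r (τ k).1 (τ k).2 - q (τ k).1 (τ k).2)
                + γ * ∑ a : A, πe y.1 a * q y.1 a))) := hst
    _ = expVal d1 T πb (k + 1)
          (fun τ => wDR d1 T πb πe γ n τ (k + 1) * g0fun T πe r q γ (τ k)) := by
        congr 1; funext τ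
        rw [show (∑ y : S × A, T (τ k).1 (τ k).2 y.1 * πb y.1 y.2 *
              (wDR d1 T πb πe γ n τ (k + 1) *
                ((r (τ k).1 (τ k).2 - q (τ k).1 (τ k).2)
                  + γ * ∑ a : A, πe y.1 a * q y.1 a)))
            = wDR d1 T πb πe γ n τ (k + 1) *
              ∑ y : S × A, T (τ k).1 (τ k).2 y.1 * πb y.1 y.2 *
                ((r (τ k).1 (τ k).2 - q (τ k).1 (τ k).2)
                  + γ * ∑ a : A, πe y.1 a * q y.1 a) from by
          rw [Finset.mul_sum]
          exact Finset.sum_congr rfl fun y _ => by ring]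
        rw [sum_step_val hTsum hπbsum (τ k)
          (r (τ k).1 (τ k).2 - q (τ k).1 (τ k).2)
          (fun s => ∑ a : A, πe s a * q s a)]
        show wDR d1 T πb πe γ n τ (k + 1) * _ = wDR d1 T πb πe γ n τ (k + 1) * _
        congr 1
        show r (τ k).1 (τ k).2 - q (τ k).1 (τ k).2
            + γ * ∑ s', T (τ k).1 (τ k).2 s' * ∑ a : A, πe s' a * q s' a
          = r (τ k).1 (τ k).2
            + γ * (∑ s', T (τ k).1 (τ k).2 s' * ∑ a : A, πe s' a * q s' a)
            - q (τ k).1 (τ k).2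
        ring

lemma main_case1 (hmul : ∀ s a, πb s a * (πe s a / πb s a) = πe s a)
    {γ : ℝ} (r q : S → A → ℝ) (n k : ℕ) (h : k + 1 ≤ n) :
    expVal d1 T πb (k + 1)
        (fun τ => wDR d1 T πb πe γ n τ (k + 1) * g0fun T πe r q γ (τ k))
      = ∑ x : S × A, dSA d1 T πe k x.1 x.2 * g0fun T πe r q γ x := by
  have hw : (fun τ : ℕ → S × A =>
        wDR d1 T πb πe γ n τ (k + 1) * g0fun T πe r q γ (τ k))
      = fun τ => (∏ j ∈ range (k + 1), rho πb πe τ j) * g0fun T πe r q γ (τ k) := by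
    funext τ
    unfold wDR
    rw [if_neg (by omega : ¬ (k + 1 = 0)), if_pos h]
  rw [hw, rho_convert hmul (k + 1) (fun τ => g0fun T πe r q γ (τ k)),
    expVal_eval k (g0fun T πe r q γ)]

lemma main_case2 (hTsum : ∀ s a, ∑ s', T s a s' = 1)
    (hπbsum : ∀ s, ∑ a, πb s a = 1)
    (hmul : ∀ s a, πb s a * (πe s a / πb s a) = πe s a)
    {γ : ℝ} (r q : S → A → ℝ) (n j : ℕ) :
    expVal d1 T πb (j + n + 1)
        (fun τ => wDR d1 T πb πe γ n τ (j + n + 1) * g0fun T πe r q γ (τ (j + n)))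
      = ∑ x : S × A, dSA d1 T πb j x.1 x.2 *
          (drfun d1 T πb πe γ x * (Kstep T πe)^[n] (g0fun T πe r q γ) x) := by
  have hw : (fun τ : ℕ → S × A =>
        wDR d1 T πb πe γ n τ (j + n + 1) * g0fun T πe r q γ (τ (j + n)))
      = fun τ => drfun d1 T πb πe γ (τ j) *
          (∏ i ∈ Icc (j + 1) (j + n), rho πb πe τ i) *
          g0fun T πe r q γ (τ (j + n)) := by
    funext τ
    unfold wDR drfun
    rw [if_neg (by omega : ¬ (j + n + 1 = 0)), if_neg (by omega : ¬ (j + n + 1 ≤ n))]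
    rw [show j + n + 1 - n - 1 = j from by omega, show j + n + 1 - n = j + 1 from by omega,
      show j + n + 1 - 1 = j + n from by omega]
  rw [hw, chainLemma hTsum hπbsum hmul n j (drfun d1 T πb πe γ) (g0fun T πe r q γ),
    expVal_eval j (fun x => drfun d1 T πb πe γ x *
      (Kstep T πe)^[n] (g0fun T πe r q γ) x)]


lemma tsum_stationary (hd1 : ∀ s, 0 ≤ d1 s) (hT : ∀ s a s', 0 ≤ T s a s')
    (hπb : ∀ s a, 0 ≤ πb s a) (hπe : ∀ s a, 0 ≤ πe s a)
    (hsupp : ∀ s a, 0 < πe s a → 0 < πb s a)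
    {γ : ℝ} (hγ0 : 0 ≤ γ) (hγ1 : γ < 1)
    (hd1sum : ∑ s, d1 s = 1) (hTsum : ∀ s a, ∑ s', T s a s' = 1)
    (hπbsum : ∀ s, ∑ a, πb s a = 1) (hπesum : ∀ s, ∑ a, πe s a = 1)
    (n : ℕ) (G : S × A → ℝ) :
    ∑' j : ℕ, γ ^ (j + n) * ∑ x : S × A, dSA d1 T πb j x.1 x.2 *
        (drfun d1 T πb πe γ x * (Kstep T πe)^[n] G x)
      = ∑' t : ℕ, γ ^ (t + n) * ∑ x : S × A, dSA d1 T πe (t + n) x.1 x.2 * G x := by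
  have hsumb : ∀ x : S × A, Summable (fun j : ℕ =>
      (γ ^ j * dSA d1 T πb j x.1 x.2) *
        (drfun d1 T πb πe γ x * (γ ^ n * (Kstep T πe)^[n] G x))) := fun x =>
    (summable_geom_dSA hd1 hT hπb hγ0 hγ1 hd1sum hTsum hπbsum x.1 x.2).mul_right _
  have hsume : ∀ x : S × A, Summable (fun t : ℕ =>
      (γ ^ t * dSA d1 T πe t x.1 x.2) * (γ ^ n * (Kstep T πe)^[n] G x)) := fun x =>
    (summable_geom_dSA hd1 hT hπe hγ0 hγ1 hd1sum hTsum hπesum x.1 x.2).mul_right _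
  calc ∑' j : ℕ, γ ^ (j + n) * ∑ x : S × A, dSA d1 T πb j x.1 x.2 *
        (drfun d1 T πb πe γ x * (Kstep T πe)^[n] G x)
      = ∑' j : ℕ, ∑ x : S × A, (γ ^ j * dSA d1 T πb j x.1 x.2) *
          (drfun d1 T πb πe γ x * (γ ^ n * (Kstep T πe)^[n] G x)) := by
        refine tsum_congr fun j => ?_
        rw [Finset.mul_sum]
        refine Finset.sum_congr rfl fun x _ => ?_
        rw [pow_add]
        ring
    _ = ∑ x : S × A, ∑' j : ℕ, (γ ^ j * dSA d1 T πb j x.1 x.2) *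
          (drfun d1 T πb πe γ x * (γ ^ n * (Kstep T πe)^[n] G x)) :=
        Summable.tsum_finsetSum fun x _ => hsumb x
    _ = ∑ x : S × A, (∑' t : ℕ, γ ^ t * dSA d1 T πe t x.1 x.2) *
          (γ ^ n * (Kstep T πe)^[n] G x) := by
        refine Finset.sum_congr rfl fun x _ => ?_
        exact core_x hd1 hT hπb hπe hsupp hγ0 hγ1 hd1sum hTsum hπbsum hπesum x _
    _ = ∑ x : S × A, ∑' t : ℕ, (γ ^ t * dSA d1 T πe t x.1 x.2) *
          (γ ^ n * (Kstep T πe)^[n] G x) :=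
        Finset.sum_congr rfl fun x _ => tsum_mul_right.symm
    _ = ∑' t : ℕ, ∑ x : S × A, (γ ^ t * dSA d1 T πe t x.1 x.2) *
          (γ ^ n * (Kstep T πe)^[n] G x) :=
        (Summable.tsum_finsetSum fun x _ => hsume x).symm
    _ = ∑' t : ℕ, γ ^ (t + n) * ∑ x : S × A, dSA d1 T πe (t + n) x.1 x.2 * G x := by
        refine tsum_congr fun t => ?_
        rw [show (∑ x : S × A, (γ ^ t * dSA d1 T πe t x.1 x.2) *
              (γ ^ n * (Kstep T πe)^[n] G x))
            = γ ^ (t + n) * ∑ x : S × A, dSA d1 T πe t x.1 x.2 *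
                (Kstep T πe)^[n] G x from by
          rw [Finset.mul_sum]
          refine Finset.sum_congr rfl fun x _ => ?_
          rw [pow_add]
          ring]
        rw [dSA_Kstep_iter hTsum hπesum n t G]

noncomputable def Dser (d1 : S → ℝ) (T : S → A → S → ℝ) (πb πe : S → A → ℝ)
    (r q : S → A → ℝ) (γ : ℝ) (n : ℕ) : ℕ → ℝ :=
  fun k => if k + 1 ≤ n
    then γ ^ k * ∑ x : S × A, dSA d1 T πe k x.1 x.2 * g0fun T πe r q γ x
    else γ ^ k * ∑ x : S × A, dSA d1 T πb (k - n) x.1 x.2 *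
      (drfun d1 T πb πe γ x * (Kstep T πe)^[n] (g0fun T πe r q γ) x)

noncomputable def aser (d1 : S → ℝ) (T : S → A → S → ℝ) (πe : S → A → ℝ)
    (r q : S → A → ℝ) (γ : ℝ) : ℕ → ℝ :=
  fun k => γ ^ k * ∑ x : S × A, dSA d1 T πe k x.1 x.2 * g0fun T πe r q γ x

lemma Dser_shift (r q : S → A → ℝ) (γ : ℝ) (n j : ℕ) :
    Dser d1 T πb πe r q γ n (j + n)
      = γ ^ (j + n) * ∑ x : S × A, dSA d1 T πb j x.1 x.2 *
        (drfun d1 T πb πe γ x * (Kstep T πe)^[n] (g0fun T πe r q γ) x) := by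
  unfold Dser
  rw [if_neg (by omega : ¬ (j + n + 1 ≤ n)), show j + n - n = j from by omega]

lemma tsum_Dser (hd1 : ∀ s, 0 ≤ d1 s) (hT : ∀ s a s', 0 ≤ T s a s')
    (hπb : ∀ s a, 0 ≤ πb s a) (hπe : ∀ s a, 0 ≤ πe s a)
    (hsupp : ∀ s a, 0 < πe s a → 0 < πb s a)
    {γ : ℝ} (hγ0 : 0 ≤ γ) (hγ1 : γ < 1)
    (hd1sum : ∑ s, d1 s = 1) (hTsum : ∀ s a, ∑ s', T s a s' = 1)
    (hπbsum : ∀ s, ∑ a, πb s a = 1) (hπesum : ∀ s, ∑ a, πe s a = 1)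
    (r q : S → A → ℝ) (n : ℕ) :
    ∑' k : ℕ, Dser d1 T πb πe r q γ n k = ∑' k : ℕ, aser d1 T πe r q γ k := by
  have hsumc2 : Summable (fun j => Dser d1 T πb πe r q γ n (j + n)) := by
    have hre : (fun j => Dser d1 T πb πe r q γ n (j + n))
        = fun j => γ ^ n * (γ ^ j * ∑ x : S × A, dSA d1 T πb j x.1 x.2 *
            (drfun d1 T πb πe γ x * (Kstep T πe)^[n] (g0fun T πe r q γ) x)) := by
      funext j
      rw [Dser_shift r q γ n j, pow_add]
      ring
    rw [hre]
    exact (summable_weighted hd1 hT hπb hγ0 hγ1 hd1sum hTsum hπbsum _).mul_left _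
  have hsumD : Summable (Dser d1 T πb πe r q γ n) := (summable_nat_add_iff n).mp hsumc2
  have hsuma : Summable (aser d1 T πe r q γ) :=
    summable_weighted hd1 hT hπe hγ0 hγ1 hd1sum hTsum hπesum _
  rw [← Summable.sum_add_tsum_nat_add n hsumD, ← Summable.sum_add_tsum_nat_add n hsuma]
  congr 1
  · refine Finset.sum_congr rfl fun i hi => ?_
    have : i + 1 ≤ n := by have := Finset.mem_range.mp hi; omega
    unfold Dser aser
    rw [if_pos this]
  · calc ∑' j : ℕ, Dser d1 T πb πe r q γ n (j + n)
        = ∑' j : ℕ, γ ^ (j + n) * ∑ x : S × A, dSA d1 T πb j x.1 x.2 *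
            (drfun d1 T πb πe γ x * (Kstep T πe)^[n] (g0fun T πe r q γ) x) :=
          tsum_congr fun j => Dser_shift r q γ n j
      _ = ∑' t : ℕ, γ ^ (t + n) * ∑ x : S × A, dSA d1 T πe (t + n) x.1 x.2 *
            g0fun T πe r q γ x :=
          tsum_stationary hd1 hT hπb hπe hsupp hγ0 hγ1 hd1sum hTsum hπbsum hπesum n _
      _ = ∑' t : ℕ, aser d1 T πe r q γ (t + n) := tsum_congr fun t => rfl

lemma tsum_aser (hd1 : ∀ s, 0 ≤ d1 s) (hT : ∀ s a s', 0 ≤ T s a s')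
    (hπe : ∀ s a, 0 ≤ πe s a)
    {γ : ℝ} (hγ0 : 0 ≤ γ) (hγ1 : γ < 1)
    (hd1sum : ∑ s, d1 s = 1) (hTsum : ∀ s a, ∑ s', T s a s' = 1)
    (hπesum : ∀ s, ∑ a, πe s a = 1) (r q : S → A → ℝ) :
    ∑' k : ℕ, aser d1 T πe r q γ k
      = (∑' k : ℕ, γ ^ k * ∑ x : S × A, dSA d1 T πe k x.1 x.2 * r x.1 x.2)
        - ∑ x : S × A, dSA d1 T πe 0 x.1 x.2 * q x.1 x.2 := by
  have hKq : ∀ x : S × A, (∑ s', T x.1 x.2 s' * ∑ a, πe s' a * q s' a)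
      = Kstep T πe (fun z : S × A => q z.1 z.2) x := by
    intro x
    show _ = ∑ y : S × A, T x.1 x.2 y.1 * πe y.1 y.2 * q y.1 y.2
    rw [Fintype.sum_prod_type]
    refine Finset.sum_congr rfl fun s' _ => ?_
    rw [Finset.mul_sum]
    exact Finset.sum_congr rfl fun a' _ => by ring
  have hsplit : ∀ k, aser d1 T πe r q γ k
      = (γ ^ k * ∑ x : S × A, dSA d1 T πe k x.1 x.2 * r x.1 x.2)
        + ((γ ^ (k + 1) * ∑ x : S × A, dSA d1 T πe (k + 1) x.1 x.2 * q x.1 x.2)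
          - (γ ^ k * ∑ x : S × A, dSA d1 T πe k x.1 x.2 * q x.1 x.2)) := by
    intro k
    have h1 : ∑ x : S × A, dSA d1 T πe k x.1 x.2 * g0fun T πe r q γ x
        = ∑ x : S × A, (dSA d1 T πe k x.1 x.2 * r x.1 x.2
            + γ * (dSA d1 T πe k x.1 x.2 * Kstep T πe (fun z : S × A => q z.1 z.2) x)
            - dSA d1 T πe k x.1 x.2 * q x.1 x.2) := by
      refine Finset.sum_congr rfl fun x _ => ?_
      unfold g0fun
      rw [← hKq x]
      ring
    have h2 : ∑ x : S × A, (dSA d1 T πe k x.1 x.2 * r x.1 x.2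
          + γ * (dSA d1 T πe k x.1 x.2 * Kstep T πe (fun z : S × A => q z.1 z.2) x)
          - dSA d1 T πe k x.1 x.2 * q x.1 x.2)
        = (∑ x : S × A, dSA d1 T πe k x.1 x.2 * r x.1 x.2)
          + γ * (∑ x : S × A, dSA d1 T πe k x.1 x.2 *
              Kstep T πe (fun z : S × A => q z.1 z.2) x)
          - ∑ x : S × A, dSA d1 T πe k x.1 x.2 * q x.1 x.2 := by
      rw [Finset.sum_sub_distrib, Finset.sum_add_distrib, ← Finset.mul_sum]
    have h3 := dSA_Kstep (d1 := d1) hTsum hπesum k (fun z : S × A => q z.1 z.2)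
    unfold aser
    rw [h1, h2, h3]
    ring
  have hSrJ : Summable (fun k : ℕ => γ ^ k * ∑ x : S × A,
      dSA d1 T πe k x.1 x.2 * r x.1 x.2) :=
    summable_weighted hd1 hT hπe hγ0 hγ1 hd1sum hTsum hπesum _
  have hSu : Summable (fun k : ℕ => γ ^ k * ∑ x : S × A,
      dSA d1 T πe k x.1 x.2 * q x.1 x.2) :=
    summable_weighted hd1 hT hπe hγ0 hγ1 hd1sum hTsum hπesum _
  have hSu1 : Summable (fun k : ℕ => γ ^ (k + 1) * ∑ x : S × A,
      dSA d1 T πe (k + 1) x.1 x.2 * q x.1 x.2) :=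
    (summable_nat_add_iff 1).mpr hSu
  have hre : (fun k => aser d1 T πe r q γ k)
      = fun k => (γ ^ k * ∑ x : S × A, dSA d1 T πe k x.1 x.2 * r x.1 x.2)
        + ((γ ^ (k + 1) * ∑ x : S × A, dSA d1 T πe (k + 1) x.1 x.2 * q x.1 x.2)
          - (γ ^ k * ∑ x : S × A, dSA d1 T πe k x.1 x.2 * q x.1 x.2)) :=
    funext hsplit
  rw [show (∑' k : ℕ, aser d1 T πe r q γ k) = ∑' k : ℕ,
      ((γ ^ k * ∑ x : S × A, dSA d1 T πe k x.1 x.2 * r x.1 x.2)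
        + ((γ ^ (k + 1) * ∑ x : S × A, dSA d1 T πe (k + 1) x.1 x.2 * q x.1 x.2)
          - (γ ^ k * ∑ x : S × A, dSA d1 T πe k x.1 x.2 * q x.1 x.2))) from
    tsum_congr hsplit]
  rw [Summable.tsum_add hSrJ (hSu1.sub hSu), Summable.tsum_sub hSu1 hSu]
  have hzero := Summable.tsum_eq_zero_add hSu
  have : ∑' k : ℕ, γ ^ (k + 1) * ∑ x : S × A, dSA d1 T πe (k + 1) x.1 x.2 * q x.1 x.2
      = (∑' k : ℕ, γ ^ k * ∑ x : S × A, dSA d1 T πe k x.1 x.2 * q x.1 x.2)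
        - γ ^ 0 * ∑ x : S × A, dSA d1 T πe 0 x.1 x.2 * q x.1 x.2 := by
    rw [hzero]
    ring
  rw [this]
  rw [pow_zero, one_mul]
  ring



end Aux

/-- doubly-robust SOPE_n identity: for any `n ≥ 0` and any
(automatically bounded) `q : S × A → ℝ`,
`J(π_e) = E[Σ_a π_e(a|S_1) q(S_1,a)]
  + E[Σ_(t=1)^∞ w(t,n) γ^(t-1) (R_t + γ Σ_a π_e(a|S_(t+1)) q(S_(t+1),a) - q(S_t,A_t))]`
(series reindexed by `t = k + 1`, 0-indexed coordinates; `wDR` encodes `w(·,n)`). -/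
theorem dr_sope_identity
    (d1 : S → ℝ) (T : S → A → S → ℝ) (πb πe : S → A → ℝ) (r : S → A → ℝ)
    (γ : ℝ) (n : ℕ) (q : S → A → ℝ)
    (hd1 : ∀ s, 0 ≤ d1 s) (hd1sum : ∑ s, d1 s = 1)
    (hT : ∀ s a s', 0 ≤ T s a s') (hTsum : ∀ s a, ∑ s', T s a s' = 1)
    (hπb : ∀ s a, 0 ≤ πb s a) (hπbsum : ∀ s, ∑ a, πb s a = 1)
    (hπe : ∀ s a, 0 ≤ πe s a) (hπesum : ∀ s, ∑ a, πe s a = 1)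
    (hγ0 : 0 ≤ γ) (hγ1 : γ < 1)
    (hsupp : ∀ s a, 0 < πe s a → 0 < πb s a) :
    Jinf d1 T πe r γ
      = expVal d1 T πb 1 (fun τ => ∑ a : A, πe (τ 0).1 a * q (τ 0).1 a)
        + ∑' k : ℕ, γ ^ k * expVal d1 T πb (k + 2)
            (fun τ => wDR d1 T πb πe γ n τ (k + 1) *
              (r (τ k).1 (τ k).2
                + γ * (∑ a : A, πe (τ (k + 1)).1 a * q (τ (k + 1)).1 a)
                - q (τ k).1 (τ k).2)) := by
  have hmul : ∀ s a, πb s a * (πe s a / πb s a) = πe s a := hmul_of_supp hπe hsupp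
  have hterm : ∀ k : ℕ, γ ^ k * expVal d1 T πb (k + 2)
      (fun τ => wDR d1 T πb πe γ n τ (k + 1) *
        (r (τ k).1 (τ k).2
          + γ * (∑ a : A, πe (τ (k + 1)).1 a * q (τ (k + 1)).1 a)
          - q (τ k).1 (τ k).2))
      = Dser d1 T πb πe r q γ n k := by
    intro k
    rw [main_red hTsum hπbsum r q n k]
    unfold Dser
    by_cases h : k + 1 ≤ n
    · rw [if_pos h, main_case1 hmul r q n k h]
    · rw [if_neg h]
      obtain ⟨j, rfl⟩ : ∃ j, k = j + n := ⟨k - n, by omega⟩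
      rw [show j + n - n = j from by omega]
      rw [main_case2 hTsum hπbsum hmul r q n j]
  have hbase : expVal d1 T πb 1 (fun τ => ∑ a : A, πe (τ 0).1 a * q (τ 0).1 a)
      = ∑ x : S × A, dSA d1 T πe 0 x.1 x.2 * q x.1 x.2 := by
    calc expVal d1 T πb 1 (fun τ => ∑ a : A, πe (τ 0).1 a * q (τ 0).1 a)
        = ∑ x : S × A, d1 x.1 * πb x.1 x.2 * ∑ a : A, πe x.1 a * q x.1 a :=
          expVal_one (fun x : S × A => ∑ a : A, πe x.1 a * q x.1 a)
      _ = ∑ s : S, d1 s * ∑ a : A, πe s a * q s a := by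
          rw [Fintype.sum_prod_type]
          refine Finset.sum_congr rfl fun s _ => ?_
          calc ∑ a : A, d1 s * πb s a * ∑ a' : A, πe s a' * q s a'
              = (∑ a : A, πb s a) * (d1 s * ∑ a' : A, πe s a' * q s a') := by
                rw [Finset.sum_mul]
                exact Finset.sum_congr rfl fun a _ => by ring
            _ = d1 s * ∑ a' : A, πe s a' * q s a' := by rw [hπbsum, one_mul]
      _ = ∑ x : S × A, dSA d1 T πe 0 x.1 x.2 * q x.1 x.2 := by
          rw [Fintype.sum_prod_type]
          refine Finset.sum_congr rfl fun s _ => ?_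
          rw [Finset.mul_sum]
          refine Finset.sum_congr rfl fun a _ => ?_
          rw [dSA_zero]
          ring
  have hJ : Jinf d1 T πe r γ
      = ∑' k : ℕ, γ ^ k * ∑ x : S × A, dSA d1 T πe k x.1 x.2 * r x.1 x.2 := by
    unfold Jinf
    exact tsum_congr fun k =>
      congrArg (fun z => γ ^ k * z) (expVal_eval k (fun x : S × A => r x.1 x.2))
  rw [show (∑' k : ℕ, γ ^ k * expVal d1 T πb (k + 2)
      (fun τ => wDR d1 T πb πe γ n τ (k + 1) *
        (r (τ k).1 (τ k).2
          + γ * (∑ a : A, πe (τ (k + 1)).1 a * q (τ (k + 1)).1 a)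
          - q (τ k).1 (τ k).2)))
    = ∑' k : ℕ, Dser d1 T πb πe r q γ n k from tsum_congr hterm]
  rw [tsum_Dser hd1 hT hπb hπe hsupp hγ0 hγ1 hd1sum hTsum hπbsum hπesum r q n]
  rw [tsum_aser hd1 hT hπe hγ0 hγ1 hd1sum hTsum hπesum r q]
  rw [hbase, hJ]
  ring
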